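/- arXiv:2410.15066 — 4 statements merged into one kernel-verified Lean document; each statement's English description precedes it below -/
import Mathlib

section
/- If c > 0 satisfies c² < (q′/N)·(S/(q′ C₀))^{N/q̃}, then there exist real numbers R₀, R₁ with 0 < R₀ < R₁ such that g(c, R₀) = g(c, R₁) = 0, g(c, t) > 0 for every t ∈ (R₀, R₁), and g(c, t) < 0 for every t ∈ (0, R₀) ∪ (R₁, ∞). -/
open Real Set

private lemma phi_deriv (qt qp A K : ℝ) (hqt : 0 < qt) {t : ℝ} (ht : 0 < t) :
    HasDerivAt (fun t : ℝ => t ^ qt / qt - A - K * t ^ qp)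
      (t ^ (qt - 1) - K * qp * t ^ (qp - 1)) t := by
  have h1 := Real.hasDerivAt_rpow_const (x := t) (p := qt) (Or.inl ht.ne')
  have h2 := Real.hasDerivAt_rpow_const (x := t) (p := qp) (Or.inl ht.ne')
  have h := ((h1.div_const qt).sub_const A).sub (h2.const_mul K)
  refine h.congr_deriv ?_
  rw [mul_div_cancel_left₀ _ hqt.ne']
  ring

private lemma aux_two_roots (qt qp A K : ℝ) (hqt : 0 < qt) (hlt : qt < qp)
    (hA : 0 < A) (hK : 0 < K)
    (φ : ℝ → ℝ) (hφ : φ = fun t : ℝ => t ^ qt / qt - A - K * t ^ qp)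
    (hmax : A < (1/qt - 1/qp) * ((K * qp) ^ (-(qp - qt)⁻¹)) ^ qt) :
    ∃ R₀ R₁ : ℝ, 0 < R₀ ∧ R₀ < R₁ ∧ φ R₀ = 0 ∧ φ R₁ = 0 ∧
      (∀ t ∈ Set.Ioo R₀ R₁, 0 < φ t) ∧
      (∀ t : ℝ, (0 < t ∧ t < R₀) ∨ R₁ < t → φ t < 0) := by
  subst hφ
  set E := qp - qt with hE
  have hEpos : 0 < E := sub_pos.2 hlt
  have hqp0 : 0 < qp := hqt.trans hlt
  have hKqp : 0 < K * qp := mul_pos hK hqp0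
  set T := (K * qp) ^ (-E⁻¹) with hT
  have hTpos : 0 < T := rpow_pos_of_pos hKqp _
  have hTE : K * qp * T ^ E = 1 := by
    rw [hT, ← Real.rpow_mul hKqp.le, show -E⁻¹ * E = -1 by field_simp, Real.rpow_neg_one]
    field_simp
  -- continuity
  have hcont : ContinuousOn (fun t : ℝ => t ^ qt / qt - A - K * t ^ qp) (Ioi (0:ℝ)) := by
    refine ContinuousOn.sub (ContinuousOn.sub ?_ continuousOn_const) ?_
    · exact (continuousOn_id.rpow_const fun x hx => Or.inl (ne_of_gt hx)).div_const qt
    · exact continuousOn_const.mul (continuousOn_id.rpow_const fun x hx => Or.inl (ne_of_gt hx))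
  -- strict mono on Ioc 0 T
  have hmono : StrictMonoOn (fun t : ℝ => t ^ qt / qt - A - K * t ^ qp) (Ioc 0 T) := by
    apply strictMonoOn_of_deriv_pos (convex_Ioc 0 T)
      (hcont.mono (fun x hx => hx.1))
    intro x hx
    rw [interior_Ioc] at hx
    rw [(phi_deriv qt qp A K hqt hx.1).deriv]
    have hx0 := hx.1
    have h1 : x ^ (qp - 1) = x ^ (qt - 1) * x ^ E := by
      rw [← Real.rpow_add hx0, hE]; ring_nf
    have h2 : x ^ E < T ^ E := Real.rpow_lt_rpow hx0.le hx.2 hEpos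
    have h3 : K * qp * x ^ E < 1 := by nlinarith [hTE]
    have hp : 0 < x ^ (qt - 1) := rpow_pos_of_pos hx0 _
    rw [h1]
    nlinarith [mul_pos hp (by linarith : (0:ℝ) < 1 - K * qp * x ^ E)]
  -- strict anti on Ici T
  have hanti : StrictAntiOn (fun t : ℝ => t ^ qt / qt - A - K * t ^ qp) (Ici T) := by
    apply strictAntiOn_of_deriv_neg (convex_Ici T)
      (hcont.mono (fun x hx => hTpos.trans_le hx))
    intro x hx
    rw [interior_Ici] at hx
    have hx0 : 0 < x := hTpos.trans hx
    rw [(phi_deriv qt qp A K hqt hx0).deriv]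
    have h1 : x ^ (qp - 1) = x ^ (qt - 1) * x ^ E := by
      rw [← Real.rpow_add hx0, hE]; ring_nf
    have h2 : T ^ E < x ^ E := Real.rpow_lt_rpow hTpos.le hx hEpos
    have h3 : 1 < K * qp * x ^ E := by nlinarith [hTE]
    have hp : 0 < x ^ (qt - 1) := rpow_pos_of_pos hx0 _
    rw [h1]
    nlinarith [mul_pos hp (by linarith : (0:ℝ) < K * qp * x ^ E - 1)]
  -- value at T is positive
  have hφT : 0 < T ^ qt / qt - A - K * T ^ qp := by
    have h1 : T ^ qp = T ^ qt * T ^ E := by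
      rw [← Real.rpow_add hTpos, hE]; ring_nf
    have h2 : K * T ^ qp = T ^ qt / qp := by
      rw [h1]
      field_simp
      linear_combination hTE
    rw [h2]
    have h3 : T ^ qt / qt - A - T ^ qt / qp = T ^ qt * (1/qt - 1/qp) - A := by ring
    rw [h3]
    nlinarith [hmax]
  -- point a with negative value
  set a := min (T / 2) ((qt * A) ^ qt⁻¹ / 2) with ha
  have hqtA : 0 < qt * A := mul_pos hqt hA
  have ha0 : 0 < a := lt_min (by linarith) (by positivity)
  have haT : a < T := (min_le_left _ _).trans_lt (by linarith)
  have hφa : a ^ qt / qt - A - K * a ^ qp < 0 := by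
    have h1 : a < (qt * A) ^ qt⁻¹ := by
      have hp : 0 < (qt * A) ^ qt⁻¹ := rpow_pos_of_pos hqtA _
      exact (min_le_right _ _).trans_lt (by linarith)
    have h2 : a ^ qt < qt * A := by
      have h := Real.rpow_lt_rpow ha0.le h1 hqt
      rwa [← Real.rpow_mul hqtA.le, inv_mul_cancel₀ hqt.ne', Real.rpow_one] at h
    have h3 : a ^ qt / qt < A := (div_lt_iff₀ hqt).2 (by linarith)
    have h4 : 0 < K * a ^ qp := mul_pos hK (rpow_pos_of_pos ha0 _)
    linarith
  -- point b with negative value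
  set b := max (T + 1) ((K * qt)⁻¹ ^ E⁻¹ + 1) with hb
  have hbT : T < b := lt_of_lt_of_le (by linarith) (le_max_left _ _)
  have hb0 : 0 < b := hTpos.trans hbT
  have hφb : b ^ qt / qt - A - K * b ^ qp < 0 := by
    have h1 : (K * qt)⁻¹ ^ E⁻¹ < b := lt_of_lt_of_le (by linarith) (le_max_right _ _)
    have hKt : (0:ℝ) < (K * qt)⁻¹ := by positivity
    have h2 : (K * qt)⁻¹ < b ^ E := by
      have h := Real.rpow_lt_rpow (by positivity) h1 hEpos
      rwa [← Real.rpow_mul hKt.le, inv_mul_cancel₀ hEpos.ne', Real.rpow_one] at h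
    have h3 : 1 / qt < K * b ^ E := by
      calc 1 / qt = K * (K * qt)⁻¹ := by field_simp
        _ < K * b ^ E := mul_lt_mul_of_pos_left h2 hK
    have h4 : b ^ qp = b ^ qt * b ^ E := by
      rw [← Real.rpow_add hb0, hE]; ring_nf
    have hbq : 0 < b ^ qt := rpow_pos_of_pos hb0 qt
    have h5 : b ^ qt / qt - K * b ^ qp ≤ 0 := by
      rw [h4]
      have h6 := mul_lt_mul_of_pos_left h3 hbq
      rw [mul_one_div] at h6
      nlinarith [h6]
    linarith
  -- IVT
  have hsub1 : Icc a T ⊆ Ioi (0:ℝ) := fun x hx => lt_of_lt_of_le ha0 hx.1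
  have hsub2 : Icc T b ⊆ Ioi (0:ℝ) := fun x hx => lt_of_lt_of_le hTpos hx.1
  obtain ⟨R₀, hR₀mem, hR₀⟩ :=
    intermediate_value_Ioo haT.le (hcont.mono hsub1) (Set.mem_Ioo.2 ⟨hφa, hφT⟩)
  obtain ⟨R₁, hR₁mem, hR₁⟩ :=
    intermediate_value_Ioo' hbT.le (hcont.mono hsub2) (Set.mem_Ioo.2 ⟨hφb, hφT⟩)
  have hR₀pos : 0 < R₀ := ha0.trans hR₀mem.1
  have hR₀T : R₀ < T := hR₀mem.2
  have hTR₁ : T < R₁ := hR₁mem.1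
  refine ⟨R₀, R₁, hR₀pos, hR₀T.trans hTR₁, hR₀, hR₁, ?_, ?_⟩
  · intro t ht
    rcases le_or_gt t T with h | h
    · have := hmono ⟨hR₀pos, hR₀T.le⟩ ⟨hR₀pos.trans ht.1, h⟩ ht.1
      simp only at this hR₀ ⊢
      linarith
    · have := hanti (Set.mem_Ici.2 h.le) (Set.mem_Ici.2 hTR₁.le) ht.2
      simp only at this hR₁ ⊢
      linarith
  · intro t ht
    rcases ht with ⟨ht0, htR₀⟩ | htR₁
    · have := hmono ⟨ht0, (htR₀.trans hR₀T).le⟩ ⟨hR₀pos, hR₀T.le⟩ htR₀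
      simp only at this hR₀ ⊢
      linarith
    · have := hanti (Set.mem_Ici.2 hTR₁.le) (Set.mem_Ici.2 (hTR₁.trans htR₁).le) htR₁
      simp only at this hR₁ ⊢
      linarith

/-- If c² < (q′/N)·(S/(q′C₀))^{N/q̃}, then there exist 0 < R₀ < R₁ with
g(c,R₀) = g(c,R₁) = 0, g(c,·) > 0 on (R₀,R₁), and g(c,·) < 0 on (0,R₀) ∪ (R₁,∞). -/
theorem stmt_2 (N : ℕ) (hN : 3 ≤ N) (q : ℝ)
    (hq : (2 * (N : ℝ) / ((N : ℝ) + 2) < q ∧ q < 2) ∨ (2 < q ∧ q < (N : ℝ)))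
    (C₀ S : ℝ) (hC₀ : 0 < C₀) (hS : 0 < S)
    (qt qp : ℝ) (hqt : qt = max 2 q)
    (hqp : qp = max (2 * (N : ℝ) / ((N : ℝ) - 2)) ((N : ℝ) * q / ((N : ℝ) - q)))
    (g : ℝ → ℝ → ℝ)
    (hg : ∀ α t : ℝ, g α t =
      1 / qt - C₀ * α ^ 2 * t ^ (-qt) - C₀ * S ^ (-(qp / qt)) * t ^ (qp - qt))
    (c : ℝ) (hc : 0 < c)
    (hc2 : c ^ 2 < qp / (N : ℝ) * (S / (qp * C₀)) ^ ((N : ℝ) / qt)) :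
    ∃ R₀ R₁ : ℝ, 0 < R₀ ∧ R₀ < R₁ ∧ g c R₀ = 0 ∧ g c R₁ = 0 ∧
      (∀ t ∈ Set.Ioo R₀ R₁, 0 < g c t) ∧
      (∀ t : ℝ, (0 < t ∧ t < R₀) ∨ R₁ < t → g c t < 0) := by
  have hN3 : (3:ℝ) ≤ (N:ℝ) := by exact_mod_cast hN
  have hNpos : (0:ℝ) < (N:ℝ) := by linarith
  -- basic structural facts about qt, qp
  have hfacts : 2 ≤ qt ∧ qt < (N:ℝ) ∧ qp * ((N:ℝ) - qt) = (N:ℝ) * qt := by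
    rcases hq with ⟨hq1, hq2⟩ | ⟨hq1, hq2⟩
    · have h2N : (0:ℝ) < 2 * (N:ℝ) / ((N:ℝ) + 2) := by positivity
      have hq0 : 0 < q := h2N.trans hq1
      have hqt' : qt = 2 := by rw [hqt, max_eq_left hq2.le]
      have hqp' : qp = 2 * (N:ℝ) / ((N:ℝ) - 2) := by
        rw [hqp, max_eq_left]
        rw [div_le_div_iff₀ (by linarith) (by linarith)]
        nlinarith [mul_le_mul_of_nonneg_left hq2.le (by positivity : (0:ℝ) ≤ (N:ℝ) * (N:ℝ))]
      refine ⟨by rw [hqt'], by rw [hqt']; linarith, ?_⟩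
      rw [hqt', hqp', div_mul_cancel₀ _ (by linarith : (N:ℝ) - 2 ≠ 0)]
      ring
    · have hqt' : qt = q := by rw [hqt, max_eq_right hq1.le]
      have hqp' : qp = (N:ℝ) * q / ((N:ℝ) - q) := by
        rw [hqp, max_eq_right]
        rw [div_le_div_iff₀ (by linarith) (by linarith)]
        nlinarith [mul_le_mul_of_nonneg_left hq1.le (by positivity : (0:ℝ) ≤ (N:ℝ) * (N:ℝ))]
      refine ⟨by rw [hqt']; linarith, by rw [hqt']; exact hq2, ?_⟩
      rw [hqt', hqp', div_mul_cancel₀ _ (by linarith : (N:ℝ) - q ≠ 0)]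
  obtain ⟨hqt2, hqtN, hkey⟩ := hfacts
  have hqt0 : 0 < qt := by linarith
  have hNqt : 0 < (N:ℝ) - qt := by linarith
  have hqtlt : qt < qp := by nlinarith [mul_pos hqt0 hqt0]
  have hqp0 : 0 < qp := hqt0.trans hqtlt
  have hEpos : 0 < qp - qt := by linarith
  -- scalar identities
  have h1qN : 1 / qt - 1 / qp = 1 / (N:ℝ) := by
    rw [div_sub_div _ _ hqt0.ne' hqp0.ne', div_eq_div_iff (by positivity) hNpos.ne']
    linear_combination hkey
  set u := (N:ℝ) / qt with hu
  -- the constants for the auxiliary function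
  set A := C₀ * c ^ 2 with hA
  set K := C₀ * S ^ (-(qp / qt)) with hK
  have hApos : 0 < A := by rw [hA]; positivity
  have hSx : (0:ℝ) < S ^ (-(qp / qt)) := rpow_pos_of_pos hS _
  have hKpos : 0 < K := by rw [hK]; positivity
  have hKqppos : 0 < K * qp := mul_pos hKpos hqp0
  have hCq : (0:ℝ) < C₀ * qp := mul_pos hC₀ hqp0
  set T := (K * qp) ^ (-(qp - qt)⁻¹) with hT
  -- exponent identities
  have hexp1 : -(qp - qt)⁻¹ * qt = 1 - u := by
    rw [hu]
    field_simp
    linear_combination hkey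
  have hexp2 : -(qp / qt) * (1 - u) = u := by
    rw [hu]
    field_simp
    linear_combination hkey
  -- compute T ^ qt
  have hTqt : T ^ qt = (C₀ * qp) * (S / (qp * C₀)) ^ u := by
    have hKqp' : K * qp = (C₀ * qp) * S ^ (-(qp / qt)) := by rw [hK]; ring
    rw [hT, ← Real.rpow_mul hKqppos.le, hexp1, hKqp',
        Real.mul_rpow hCq.le hSx.le, ← Real.rpow_mul hS.le, hexp2,
        show qp * C₀ = C₀ * qp from mul_comm qp C₀,
        Real.div_rpow hS.le hCq.le,
        show (1:ℝ) - u = 1 + -u by ring,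
        Real.rpow_add hCq, Real.rpow_one, Real.rpow_neg hCq.le]
    ring
  -- the maximum condition
  have hmax : A < (1/qt - 1/qp) * ((K * qp) ^ (-(qp - qt)⁻¹)) ^ qt := by
    rw [← hT, h1qN, hTqt]
    calc A = C₀ * c ^ 2 := hA
      _ < C₀ * (qp / (N:ℝ) * (S / (qp * C₀)) ^ u) := mul_lt_mul_of_pos_left hc2 hC₀
      _ = 1 / (N:ℝ) * (C₀ * qp * (S / (qp * C₀)) ^ u) := by ring
  obtain ⟨R₀, R₁, hR₀pos, hRlt, hv₀, hv₁, hpos, hneg⟩ :=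
    aux_two_roots qt qp A K hqt0 hqtlt hApos hKpos _ rfl hmax
  -- relate g to the auxiliary function
  have hgφ : ∀ t : ℝ, 0 < t → g c t = t ^ (-qt) * (t ^ qt / qt - A - K * t ^ qp) := by
    intro t ht
    rw [hg c t, hA, hK]
    have e1 : t ^ (-qt) * t ^ qt = 1 := by
      rw [← Real.rpow_add ht]; simp
    have e2 : t ^ (-qt) * t ^ qp = t ^ (qp - qt) := by
      rw [← Real.rpow_add ht]; ring_nf
    linear_combination (-(1/qt)) * e1 + (C₀ * S ^ (-(qp/qt))) * e2
  refine ⟨R₀, R₁, hR₀pos, hRlt, ?_, ?_, ?_, ?_⟩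
  · rw [hgφ R₀ hR₀pos, hv₀, mul_zero]
  · rw [hgφ R₁ (hR₀pos.trans hRlt), hv₁, mul_zero]
  · intro t ht
    have ht0 : 0 < t := hR₀pos.trans ht.1
    rw [hgφ t ht0]
    have h := hpos t ht
    exact mul_pos (rpow_pos_of_pos ht0 _) h
  · intro t ht
    have ht0 : 0 < t := by
      rcases ht with ⟨h1, _⟩ | h
      · exact h1
      · exact (hR₀pos.trans hRlt).trans h
    rw [hgφ t ht0]
    have h := hneg t ht
    exact mul_neg_of_pos_of_neg (rpow_pos_of_pos ht0 _) h
end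

section
/- If t > 0 and α₁ ≥ α₂ > 0 are real numbers, then for every s ∈ [(α₂/α₁)^{2/q̃}·t, t] one has g(α₂, s) ≥ g(α₁, t). -/
open Real Set

/-!
The term `C₀ S^{-q'/q̃} t^{q'-q̃}` is monotone in `t` because `q̃ ≤ q'`, so it only decreases when
`t` is replaced by `s ≤ t`. The term `C₀ α² t^{-q̃}` does not increase when `(α₁, t)` is replaced by
`(α₂, s)` exactly when `α₂² t^{q̃} ≤ α₁² s^{q̃}`, i.e. when `(α₂/α₁)^{2/q̃} t ≤ s`.
-/

lemma max_two_le_max_sobolev_exponent {N q : ℝ} (hN : 2 < N) (hq : q < N) :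
    max 2 q ≤ max (2 * N / (N - 2)) (N * q / (N - q)) := by
  refine max_le_max ?_ ?_
  · rw [le_div_iff₀ (by linarith)]
    linarith
  · rw [le_div_iff₀ (by linarith)]
    nlinarith [sq_nonneg q]

lemma sq_mul_rpow_neg_le_of_le {p α₁ α₂ t s : ℝ} (hp : 0 < p) (hα₁ : 0 < α₁) (hα₂ : 0 < α₂)
    (ht : 0 < t) (hs : (α₂ / α₁) ^ (2 / p) * t ≤ s) :
    α₂ ^ 2 * s ^ (-p) ≤ α₁ ^ 2 * t ^ (-p) := by
  have hratio : 0 < (α₂ / α₁) ^ (2 / p) := rpow_pos_of_pos (div_pos hα₂ hα₁) _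
  have hs_pos : 0 < s := (mul_pos hratio ht).trans_le hs
  have hpow : (α₂ / α₁) ^ 2 * t ^ p ≤ s ^ p :=
    calc (α₂ / α₁) ^ 2 * t ^ p = ((α₂ / α₁) ^ (2 / p) * t) ^ p := by
          rw [mul_rpow hratio.le ht.le, ← rpow_mul (div_pos hα₂ hα₁).le,
            div_mul_cancel₀ _ hp.ne', rpow_two]
      _ ≤ s ^ p := rpow_le_rpow (mul_pos hratio ht).le hs hp.le
  rw [div_pow, div_mul_eq_mul_div, div_le_iff₀ (by positivity)] at hpow
  rw [rpow_neg ht.le, rpow_neg hs_pos.le, ← div_eq_mul_inv, ← div_eq_mul_inv,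
    div_le_div_iff₀ (rpow_pos_of_pos hs_pos _) (rpow_pos_of_pos ht _)]
  linarith

/-- If t > 0 and α₁ ≥ α₂ > 0 then for every s ∈ [(α₂/α₁)^{2/q̃}·t, t] one has
g(α₂,s) ≥ g(α₁,t). -/
theorem stmt_3 (N : ℕ) (hN : 3 ≤ N) (q : ℝ)
    (hq : (2 * (N : ℝ) / ((N : ℝ) + 2) < q ∧ q < 2) ∨ (2 < q ∧ q < (N : ℝ)))
    (C₀ S : ℝ) (hC₀ : 0 < C₀) (hS : 0 < S)
    (qt qp : ℝ) (hqt : qt = max 2 q)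
    (hqp : qp = max (2 * (N : ℝ) / ((N : ℝ) - 2)) ((N : ℝ) * q / ((N : ℝ) - q)))
    (g : ℝ → ℝ → ℝ)
    (hg : ∀ α t : ℝ, g α t =
      1 / qt - C₀ * α ^ 2 * t ^ (-qt) - C₀ * S ^ (-(qp / qt)) * t ^ (qp - qt))
    (t : ℝ) (ht : 0 < t) (α₁ α₂ : ℝ) (hα₂ : 0 < α₂) (h12 : α₂ ≤ α₁) :
    ∀ s ∈ Set.Icc ((α₂ / α₁) ^ (2 / qt) * t) t, g α₁ t ≤ g α₂ s := by
  rintro s ⟨hs_lo, hs_hi⟩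
  have hN' : (3 : ℝ) ≤ N := by exact_mod_cast hN
  have hqN : q < N := by rcases hq with ⟨-, h⟩ | ⟨-, h⟩ <;> linarith
  have hqt_le : qt ≤ qp := hqt ▸ hqp ▸ max_two_le_max_sobolev_exponent (by linarith) hqN
  have hqt_pos : 0 < qt := hqt ▸ lt_max_of_lt_left two_pos
  have hα₁ : 0 < α₁ := hα₂.trans_le h12
  have hs : 0 < s := (mul_pos (rpow_pos_of_pos (div_pos hα₂ hα₁) _) ht).trans_le hs_lo
  have hsingular := mul_le_mul_of_nonneg_left
    (sq_mul_rpow_neg_le_of_le hqt_pos hα₁ hα₂ ht hs_lo) hC₀.le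
  have hcritical := mul_le_mul_of_nonneg_left
    (rpow_le_rpow hs.le hs_hi (sub_nonneg.2 hqt_le))
    (by positivity : 0 ≤ C₀ * S ^ (-(qp / qt)))
  rw [hg, hg]
  linarith
end

section
/- If c > 0 satisfies c² < (q′/N)·(S/(q′ C₀))^{N/q̃}, then there exist ε > 0 and functions R₀, R₁ : (c−ε, c+ε) → (0,∞) of class C¹, each strictly monotone (hence invertible onto their images), such that for every c′ ∈ (c−ε, c+ε): (i) c′ > 0 and c′² < (q′/N)·(S/(q′ C₀))^{N/q̃}; (ii) 0 < R₀(c′) < R₁(c′); (iii) g(c′, R₀(c′)) = g(c′, R₁(c′)) = 0; (iv) g(c′, t) > 0 for t ∈ (R₀(c′), R₁(c′)) and g(c′, t) < 0 for t ∈ (0, R₀(c′)) ∪ (R₁(c′), ∞). -/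
set_option maxHeartbeats 1000000

open Real Set Filter Topology

lemma local_inv_aux (f : ℝ → ℝ) (a d : ℝ) (hf : ContDiffAt ℝ 1 f a)
    (hd : HasDerivAt f d a) (hd0 : d ≠ 0) :
    ∃ φ : ℝ → ℝ, ContDiffAt ℝ 1 φ (f a) ∧ φ (f a) = a ∧ (∀ᶠ y in 𝓝 (f a), f (φ y) = y) := by
  have hf' : HasFDerivAt f
      ((ContinuousLinearEquiv.unitsEquivAut ℝ (Units.mk0 d hd0)) : ℝ →L[ℝ] ℝ) a :=
    hd.hasFDerivAt_equiv hd0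
  refine ⟨hf.localInverse hf' one_ne_zero, hf.to_localInverse hf' one_ne_zero,
    hf.localInverse_apply_image hf' one_ne_zero, ?_⟩
  exact (hf.hasStrictFDerivAt' hf' one_ne_zero).eventually_right_inverse

/-- If c² < (q′/N)·(S/(q′C₀))^{N/q̃}, then there exist ε > 0 and C¹, strictly monotone
(hence invertible) functions R₀, R₁ on (c−ε, c+ε) such that every c′ ∈ (c−ε, c+ε)
satisfies the same smallness condition and g(c′,·) vanishes exactly at R₀(c′), R₁(c′),
being positive between them and negative outside. -/
theorem stmt_4 (N : ℕ) (hN : 3 ≤ N) (q : ℝ)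
    (hq : (2 * (N : ℝ) / ((N : ℝ) + 2) < q ∧ q < 2) ∨ (2 < q ∧ q < (N : ℝ)))
    (C₀ S : ℝ) (hC₀ : 0 < C₀) (hS : 0 < S)
    (qt qp : ℝ) (hqt : qt = max 2 q)
    (hqp : qp = max (2 * (N : ℝ) / ((N : ℝ) - 2)) ((N : ℝ) * q / ((N : ℝ) - q)))
    (g : ℝ → ℝ → ℝ)
    (hg : ∀ α t : ℝ, g α t =
      1 / qt - C₀ * α ^ 2 * t ^ (-qt) - C₀ * S ^ (-(qp / qt)) * t ^ (qp - qt))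
    (c : ℝ) (hc : 0 < c)
    (hc2 : c ^ 2 < qp / (N : ℝ) * (S / (qp * C₀)) ^ ((N : ℝ) / qt)) :
    ∃ ε : ℝ, 0 < ε ∧ ∃ R₀ R₁ : ℝ → ℝ,
      ContDiffOn ℝ 1 R₀ (Set.Ioo (c - ε) (c + ε)) ∧
      ContDiffOn ℝ 1 R₁ (Set.Ioo (c - ε) (c + ε)) ∧
      (StrictMonoOn R₀ (Set.Ioo (c - ε) (c + ε)) ∨
        StrictAntiOn R₀ (Set.Ioo (c - ε) (c + ε))) ∧
      (StrictMonoOn R₁ (Set.Ioo (c - ε) (c + ε)) ∨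
        StrictAntiOn R₁ (Set.Ioo (c - ε) (c + ε))) ∧
      ∀ c' ∈ Set.Ioo (c - ε) (c + ε),
        0 < c' ∧
        c' ^ 2 < qp / (N : ℝ) * (S / (qp * C₀)) ^ ((N : ℝ) / qt) ∧
        0 < R₀ c' ∧ R₀ c' < R₁ c' ∧
        g c' (R₀ c') = 0 ∧ g c' (R₁ c') = 0 ∧
        (∀ t ∈ Set.Ioo (R₀ c') (R₁ c'), 0 < g c' t) ∧
        (∀ t : ℝ, (0 < t ∧ t < R₀ c') ∨ R₁ c' < t → g c' t < 0) := by
  -- basic facts about qt and qp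
  have hN3 : (3:ℝ) ≤ (N:ℝ) := by exact_mod_cast hN
  have key : 2 ≤ qt ∧ qt < (N:ℝ) ∧ qp * ((N:ℝ) - qt) = (N:ℝ) * qt := by
    rcases hq with ⟨hq1, hq2⟩ | ⟨hq1, hq2⟩
    · have hq0 : 0 < q := lt_trans (by positivity) hq1
      have hN2 : ((N:ℝ) - 2) ≠ 0 := by linarith
      have hqt2 : qt = 2 := by rw [hqt]; exact max_eq_left hq2.le
      have hqp2 : qp = 2 * (N:ℝ) / ((N:ℝ) - 2) := by
        rw [hqp]; apply max_eq_left
        rw [div_le_div_iff₀ (by linarith) (by linarith)]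
        nlinarith [mul_le_mul_of_nonneg_left hq2.le (sq_nonneg (N:ℝ))]
      refine ⟨by rw [hqt2], by rw [hqt2]; linarith, ?_⟩
      rw [hqt2, hqp2]
      field_simp
    · have hqN : ((N:ℝ) - q) ≠ 0 := by linarith
      have hqt2 : qt = q := by rw [hqt]; exact max_eq_right hq1.le
      have hqp2 : qp = (N:ℝ) * q / ((N:ℝ) - q) := by
        rw [hqp]; apply max_eq_right
        rw [div_le_div_iff₀ (by linarith) (by linarith)]
        nlinarith [mul_le_mul_of_nonneg_left hq1.le (sq_nonneg (N:ℝ))]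
      refine ⟨by rw [hqt2]; linarith, by rw [hqt2]; linarith, ?_⟩
      rw [hqt2, hqp2]
      field_simp
  obtain ⟨hqt2le, hqtN, hrel⟩ := key
  have hqt0 : (0:ℝ) < qt := by linarith
  have hqtP : qt < qp := by nlinarith
  have hqp0 : 0 < qp := lt_trans hqt0 hqtP
  have hPp : 0 < qp - qt := by linarith
  have hN0 : (0:ℝ) < (N:ℝ) := lt_trans hqt0 hqtN
  obtain ⟨ψ, hψ⟩ : ∃ ψ : ℝ → ℝ, ∀ t : ℝ,
      ψ t = t ^ qt / (qt * C₀) - S ^ (-(qp / qt)) * t ^ qp := ⟨_, fun _ => rfl⟩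
  set A : ℝ := S ^ (qp / qt) / (qp * C₀) with hA
  have hA0 : 0 < A := by positivity
  set T : ℝ := A ^ (1 / (qp - qt)) with hT
  have hT0 : 0 < T := rpow_pos_of_pos hA0 _
  have hTpow : T ^ (qp - qt) = A := by
    rw [hT, ← Real.rpow_mul hA0.le, one_div, inv_mul_cancel₀ hPp.ne', Real.rpow_one]
  have hSA : S ^ (-(qp / qt)) * A = 1 / (qp * C₀) := by
    rw [hA, Real.rpow_neg hS.le]
    field_simp
  obtain ⟨D, hD⟩ : ∃ D : ℝ → ℝ, ∀ t : ℝ,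
      D t = t ^ (qt - 1) / C₀ - qp * S ^ (-(qp / qt)) * t ^ (qp - 1) := ⟨_, fun _ => rfl⟩
  have hderiv : ∀ t : ℝ, 0 < t → HasDerivAt ψ (D t) t := by
    intro t ht
    have h1 : HasDerivAt (fun t : ℝ => t ^ qt) (qt * t ^ (qt - 1)) t :=
      Real.hasDerivAt_rpow_const (Or.inl ht.ne')
    have h2 : HasDerivAt (fun t : ℝ => t ^ qp) (qp * t ^ (qp - 1)) t :=
      Real.hasDerivAt_rpow_const (Or.inl ht.ne')
    have h3 := (h1.div_const (qt * C₀)).sub ((h2.const_mul (S ^ (-(qp / qt)))))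
    have he : D t = qt * t ^ (qt - 1) / (qt * C₀) - S ^ (-(qp / qt)) * (qp * t ^ (qp - 1)) := by
      rw [hD]; field_simp
    rw [he]
    exact h3.congr_of_eventuallyEq (by filter_upwards [univ_mem] with x _; rw [hψ]; rfl)
  -- factorization of D
  have hDfac : ∀ t : ℝ, 0 < t →
      D t = t ^ (qt - 1) * (1 / C₀ - qp * S ^ (-(qp / qt)) * t ^ (qp - qt)) := by
    intro t ht
    have : t ^ (qp - 1) = t ^ (qt - 1) * t ^ (qp - qt) := by
      rw [← Real.rpow_add ht]; ring_nf
    rw [hD, this]; ring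
  have hS0 : (0:ℝ) < S ^ (-(qp / qt)) := rpow_pos_of_pos hS _
  have hkey : qp * S ^ (-(qp / qt)) * A = 1 / C₀ := by
    rw [mul_assoc, hSA]; field_simp
  have hDpos : ∀ t : ℝ, 0 < t → t < T → 0 < D t := by
    intro t ht htT
    rw [hDfac t ht]
    have h1 : t ^ (qp - qt) < A := by
      rw [← hTpow]; exact Real.rpow_lt_rpow ht.le htT hPp
    have h2 : qp * S ^ (-(qp / qt)) * t ^ (qp - qt) < 1 / C₀ := by
      rw [← hkey]; exact mul_lt_mul_of_pos_left h1 (by positivity)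
    have h3 := rpow_pos_of_pos ht (qt - 1)
    nlinarith
  have hDneg : ∀ t : ℝ, T < t → D t < 0 := by
    intro t htT
    have ht : 0 < t := lt_trans hT0 htT
    rw [hDfac t ht]
    have h1 : A < t ^ (qp - qt) := by
      rw [← hTpow]; exact Real.rpow_lt_rpow hT0.le htT hPp
    have h2 : 1 / C₀ < qp * S ^ (-(qp / qt)) * t ^ (qp - qt) := by
      rw [← hkey]; exact mul_lt_mul_of_pos_left h1 (by positivity)
    have h3 := rpow_pos_of_pos ht (qt - 1)
    nlinarith
  -- continuity
  have hψc : ∀ x : ℝ, 0 ≤ x → ContinuousAt ψ x := by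
    intro x hx
    have h1 : ContinuousAt (fun t : ℝ => t ^ qt) x :=
      Real.continuousAt_rpow_const _ _ (Or.inr hqt0.le)
    have h2 : ContinuousAt (fun t : ℝ => t ^ qp) x :=
      Real.continuousAt_rpow_const _ _ (Or.inr hqp0.le)
    have : ContinuousAt (fun t : ℝ => t ^ qt / (qt * C₀) - S ^ (-(qp / qt)) * t ^ qp) x :=
      (h1.div_const _).sub (h2.const_mul _)
    exact this.congr (by filter_upwards [univ_mem] with y _ ; rw [hψ])
  have hψ0 : ψ 0 = 0 := by
    rw [hψ, Real.zero_rpow hqt0.ne', Real.zero_rpow hqp0.ne']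
    simp
  -- strict monotonicity on [0, T], strict antitonicity on [T, ∞)
  have hmono : StrictMonoOn ψ (Icc 0 T) := by
    apply strictMonoOn_of_deriv_pos (convex_Icc _ _)
      (fun x hx => (hψc x hx.1).continuousWithinAt)
    intro x hx
    rw [interior_Icc] at hx
    rw [(hderiv x hx.1).deriv]
    exact hDpos x hx.1 hx.2
  have hanti : StrictAntiOn ψ (Ici T) := by
    apply strictAntiOn_of_deriv_neg (convex_Ici _)
      (fun x hx => (hψc x (le_trans hT0.le hx)).continuousWithinAt)
    intro x hx
    rw [interior_Ici] at hx
    rw [(hderiv x (lt_trans hT0 hx)).deriv]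
    exact hDneg x hx
  -- the value at the maximum point
  set M : ℝ := ψ T with hMdef
  have hTqp : T ^ qp = T ^ qt * A := by
    rw [← hTpow, ← Real.rpow_add hT0]; ring_nf
  have hMfac : M = T ^ qt * (1 / (qt * C₀) - 1 / (qp * C₀)) := by
    rw [hMdef, hψ, hTqp, ← hSA]; ring
  have hE0 : (0:ℝ) < qp * C₀ := by positivity
  have hTqt : T ^ qt = S ^ ((N:ℝ) / qt) * (qp * C₀) ^ (-(((N:ℝ) - qt) / qt)) := by
    have e1 : T ^ qt = A ^ (((N:ℝ) - qt) / qt) := by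
      rw [hT, ← Real.rpow_mul hA0.le]
      congr 1
      field_simp
      linear_combination -hrel
    rw [e1, hA, Real.div_rpow (Real.rpow_pos_of_pos hS _).le hE0.le,
      ← Real.rpow_mul hS.le, Real.rpow_neg hE0.le, div_eq_mul_inv]
    congr 2
    field_simp
    linear_combination hrel
  have hM : M = qp / (N:ℝ) * (S / (qp * C₀)) ^ ((N:ℝ) / qt) := by
    have e2 : (qp * C₀) ^ (-(((N:ℝ) - qt) / qt)) = (qp * C₀) ^ (-((N:ℝ) / qt)) * (qp * C₀) := by
      rw [show (-(((N:ℝ) - qt) / qt)) = -((N:ℝ) / qt) + 1 by field_simp; ring,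
        Real.rpow_add hE0, Real.rpow_one]
    have e3 : (S / (qp * C₀)) ^ ((N:ℝ) / qt)
        = S ^ ((N:ℝ) / qt) * (qp * C₀) ^ (-((N:ℝ) / qt)) := by
      rw [Real.div_rpow hS.le hE0.le, Real.rpow_neg hE0.le, div_eq_mul_inv]
    rw [hMfac, hTqt, e2, e3]
    have e4 : (qp * C₀) * (1 / (qt * C₀) - 1 / (qp * C₀)) = qp / (N:ℝ) := by
      have h1 : (qp * C₀) * (1 / (qt * C₀) - 1 / (qp * C₀)) = (qp - qt) / qt := by
        field_simp
      rw [h1, div_eq_div_iff hqt0.ne' hN0.ne']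
      linarith [hrel]
    linear_combination (S ^ ((N:ℝ) / qt) * (qp * C₀) ^ (-((N:ℝ) / qt))) * e4
  -- root existence
  have hcontIcc : ∀ b : ℝ, ContinuousOn ψ (Icc 0 b) := fun b x hx => (hψc x hx.1).continuousWithinAt
  have hroot0 : ∀ a : ℝ, 0 < a → a < M → ∃ t, 0 < t ∧ t < T ∧ ψ t = a := by
    intro a ha haM
    have h := intermediate_value_Ioo hT0.le ((hcontIcc T))
    rw [hψ0] at h
    obtain ⟨t, ht, hta⟩ := h ⟨ha, haM⟩
    exact ⟨t, ht.1, ht.2, hta⟩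
  -- a point where ψ is negative
  obtain ⟨X, hTX, hψX⟩ : ∃ X, T < X ∧ ψ X < 0 := by
    set B1 : ℝ := S ^ (qp / qt) / (qt * C₀) with hB1
    have hB10 : 0 < B1 := by positivity
    set X : ℝ := max T (B1 ^ (1 / (qp - qt))) + 1 with hX
    have hBX : B1 ^ (1 / (qp - qt)) < X := by
      have := le_max_right T (B1 ^ (1 / (qp - qt)))
      simp only [hX]; linarith
    have hTX : T < X := by
      have := le_max_left T (B1 ^ (1 / (qp - qt)))
      simp only [hX]; linarith
    have hX0 : 0 < X := lt_trans hT0 hTX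
    refine ⟨X, hTX, ?_⟩
    have hBpow : (B1 ^ (1 / (qp - qt))) ^ (qp - qt) = B1 := by
      rw [← Real.rpow_mul hB10.le, one_div, inv_mul_cancel₀ hPp.ne', Real.rpow_one]
    have h1 : B1 < X ^ (qp - qt) := by
      rw [← hBpow]
      exact Real.rpow_lt_rpow (Real.rpow_pos_of_pos hB10 _).le hBX hPp
    have h2 : 1 / (qt * C₀) < S ^ (-(qp / qt)) * X ^ (qp - qt) := by
      have e : S ^ (-(qp / qt)) * B1 = 1 / (qt * C₀) := by
        rw [hB1, Real.rpow_neg hS.le]; field_simp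
      rw [← e]
      exact mul_lt_mul_of_pos_left h1 hS0
    have hfac : ψ X = X ^ qt * (1 / (qt * C₀) - S ^ (-(qp / qt)) * X ^ (qp - qt)) := by
      have : X ^ qp = X ^ qt * X ^ (qp - qt) := by
        rw [← Real.rpow_add hX0]; ring_nf
      rw [hψ, this]; ring
    rw [hfac]
    have := Real.rpow_pos_of_pos hX0 qt
    nlinarith
  have hroot1 : ∀ a : ℝ, 0 < a → a < M → ∃ t, T < t ∧ ψ t = a := by
    intro a ha haM
    have hcont : ContinuousOn ψ (Icc T X) := fun x hx =>
      (hψc x (le_trans hT0.le hx.1)).continuousWithinAt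
    have h := intermediate_value_Ioo' hTX.le hcont
    obtain ⟨t, ht, hta⟩ := h ⟨lt_trans hψX ha, haM⟩
    exact ⟨t, ht.1, hta⟩
  -- choice functions
  have hch0 : ∀ a : ℝ, ∃ t, (0 < a ∧ a < M) → (0 < t ∧ t < T ∧ ψ t = a) := by
    intro a
    by_cases h : 0 < a ∧ a < M
    · obtain ⟨t, ht⟩ := hroot0 a h.1 h.2; exact ⟨t, fun _ => ht⟩
    · exact ⟨1, fun h' => absurd h' h⟩
  have hch1 : ∀ a : ℝ, ∃ t, (0 < a ∧ a < M) → (T < t ∧ ψ t = a) := by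
    intro a
    by_cases h : 0 < a ∧ a < M
    · obtain ⟨t, ht⟩ := hroot1 a h.1 h.2; exact ⟨t, fun _ => ht⟩
    · exact ⟨1, fun h' => absurd h' h⟩
  choose r0 hr0 using hch0
  choose r1 hr1 using hch1
  -- smoothness of r0
  have hr0cd : ∀ a : ℝ, 0 < a → a < M → ContDiffAt ℝ 1 r0 a := by
    intro a ha haM
    obtain ⟨ht0, htT, hta⟩ := hr0 a ⟨ha, haM⟩
    have hcd : ContDiffAt ℝ 1 ψ (r0 a) := by
      have h1 : ContDiffAt ℝ 1 (fun t : ℝ => t ^ qt) (r0 a) :=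
        Real.contDiffAt_rpow_const_of_ne ht0.ne'
      have h2 : ContDiffAt ℝ 1 (fun t : ℝ => t ^ qp) (r0 a) :=
        Real.contDiffAt_rpow_const_of_ne ht0.ne'
      exact ((h1.div_const _).sub (contDiffAt_const.mul h2)).congr_of_eventuallyEq
        (Filter.Eventually.of_forall fun x => hψ x)
    have hd := hderiv (r0 a) ht0
    have hd0 : D (r0 a) ≠ 0 := (hDpos (r0 a) ht0 htT).ne'
    obtain ⟨φ, hφcd, hφa, hφinv⟩ := local_inv_aux ψ (r0 a) (D (r0 a)) hcd hd hd0
    rw [hta] at hφcd hφa hφinv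
    have hφc : ContinuousAt φ a := hφcd.continuousAt
    have hev1 : ∀ᶠ y in 𝓝 a, y ∈ Ioo (0:ℝ) M := isOpen_Ioo.eventually_mem ⟨ha, haM⟩
    have hev2 : ∀ᶠ y in 𝓝 a, φ y ∈ Ioo (0:ℝ) T :=
      hφc.eventually_mem (isOpen_Ioo.mem_nhds (by rw [hφa]; exact ⟨ht0, htT⟩))
    have heq : r0 =ᶠ[𝓝 a] φ := by
      filter_upwards [hev1, hev2, hφinv] with y hy1 hy2 hy3
      obtain ⟨hy0, hyT, hyψ⟩ := hr0 y ⟨hy1.1, hy1.2⟩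
      exact hmono.injOn ⟨hy0.le, hyT.le⟩ ⟨hy2.1.le, hy2.2.le⟩ (by rw [hyψ, hy3])
    exact hφcd.congr_of_eventuallyEq heq
  -- smoothness of r1
  have hr1cd : ∀ a : ℝ, 0 < a → a < M → ContDiffAt ℝ 1 r1 a := by
    intro a ha haM
    obtain ⟨htT, hta⟩ := hr1 a ⟨ha, haM⟩
    have ht0 : 0 < r1 a := lt_trans hT0 htT
    have hcd : ContDiffAt ℝ 1 ψ (r1 a) := by
      have h1 : ContDiffAt ℝ 1 (fun t : ℝ => t ^ qt) (r1 a) :=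
        Real.contDiffAt_rpow_const_of_ne ht0.ne'
      have h2 : ContDiffAt ℝ 1 (fun t : ℝ => t ^ qp) (r1 a) :=
        Real.contDiffAt_rpow_const_of_ne ht0.ne'
      exact ((h1.div_const _).sub (contDiffAt_const.mul h2)).congr_of_eventuallyEq
        (Filter.Eventually.of_forall fun x => hψ x)
    have hd := hderiv (r1 a) ht0
    have hd0 : D (r1 a) ≠ 0 := (hDneg (r1 a) htT).ne
    obtain ⟨φ, hφcd, hφa, hφinv⟩ := local_inv_aux ψ (r1 a) (D (r1 a)) hcd hd hd0
    rw [hta] at hφcd hφa hφinv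
    have hφc : ContinuousAt φ a := hφcd.continuousAt
    have hev1 : ∀ᶠ y in 𝓝 a, y ∈ Ioo (0:ℝ) M := isOpen_Ioo.eventually_mem ⟨ha, haM⟩
    have hev2 : ∀ᶠ y in 𝓝 a, φ y ∈ Ioi T :=
      hφc.eventually_mem (isOpen_Ioi.mem_nhds (by rw [hφa]; exact htT))
    have heq : r1 =ᶠ[𝓝 a] φ := by
      filter_upwards [hev1, hev2, hφinv] with y hy1 hy2 hy3
      obtain ⟨hyT, hyψ⟩ := hr1 y ⟨hy1.1, hy1.2⟩
      exact hanti.injOn hyT.le (mem_Ici.mpr (le_of_lt (mem_Ioi.mp hy2))) (by rw [hyψ, hy3])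
    exact hφcd.congr_of_eventuallyEq heq
  -- monotonicity
  have hr0mono : ∀ a b : ℝ, 0 < a → a < M → b < M → a < b → r0 a < r0 b := by
    intro a b ha haM hbM hab
    have hb : 0 < b := lt_trans ha hab
    obtain ⟨ha0, haT, haψ⟩ := hr0 a ⟨ha, haM⟩
    obtain ⟨hb0, hbT, hbψ⟩ := hr0 b ⟨hb, hbM⟩
    exact (hmono.lt_iff_lt ⟨ha0.le, haT.le⟩ ⟨hb0.le, hbT.le⟩).mp (by rw [haψ, hbψ]; exact hab)
  have hr1anti : ∀ a b : ℝ, 0 < a → a < M → b < M → a < b → r1 b < r1 a := by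
    intro a b ha haM hbM hab
    have hb : 0 < b := lt_trans ha hab
    obtain ⟨haT, haψ⟩ := hr1 a ⟨ha, haM⟩
    obtain ⟨hbT, hbψ⟩ := hr1 b ⟨hb, hbM⟩
    exact (hanti.lt_iff_gt haT.le hbT.le).mp (by rw [haψ, hbψ]; exact hab)
  -- the smallness hypothesis in terms of M
  have hc2' : c ^ 2 < M := by rw [hM]; exact hc2
  have hM0 : 0 < M := lt_trans (by positivity : (0:ℝ) < c ^ 2) hc2'
  -- choice of ε
  have hcsq : c < Real.sqrt M := (Real.lt_sqrt hc.le).mpr hc2'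
  refine ⟨min c (Real.sqrt M - c), lt_min hc (by linarith), fun x => r0 (x ^ 2), fun x => r1 (x ^ 2), ?_⟩
  set ε := min c (Real.sqrt M - c) with hε
  have hmem : ∀ c' ∈ Ioo (c - ε) (c + ε), 0 < c' ∧ c' ^ 2 < M := by
    intro c' hc'
    have h1 : 0 < c' := by
      have := min_le_left c (Real.sqrt M - c)
      have := hc'.1
      simp only [hε] at *
      linarith
    have h2 : c' < Real.sqrt M := by
      have := min_le_right c (Real.sqrt M - c)
      have := hc'.2
      simp only [hε] at *
      linarith
    exact ⟨h1, (Real.lt_sqrt h1.le).mp h2⟩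
  -- relation between g and ψ
  have hgψ : ∀ α t : ℝ, 0 < t → g α t = C₀ * t ^ (-qt) * (ψ t - α ^ 2) := by
    intro α t ht
    have e1 : t ^ (-qt) * t ^ qt = 1 := by
      rw [← Real.rpow_add ht]; simp
    have e2 : t ^ (-qt) * t ^ qp = t ^ (qp - qt) := by
      rw [← Real.rpow_add ht]; ring_nf
    have h1 : C₀ * t ^ (-qt) * (t ^ qt / (qt * C₀)) = 1 / qt := by
      have e3 : C₀ * t ^ (-qt) * (t ^ qt / (qt * C₀))
          = (t ^ (-qt) * t ^ qt) * (C₀ / (qt * C₀)) := by ring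
      rw [e3, e1, one_mul]
      rw [div_eq_div_iff (by positivity) hqt0.ne']
      ring
    have h2 : C₀ * t ^ (-qt) * (S ^ (-(qp / qt)) * t ^ qp)
        = C₀ * S ^ (-(qp / qt)) * t ^ (qp - qt) := by
      rw [show C₀ * t ^ (-qt) * (S ^ (-(qp / qt)) * t ^ qp)
        = C₀ * S ^ (-(qp / qt)) * (t ^ (-qt) * t ^ qp) by ring, e2]
    rw [hg, hψ]
    linear_combination h2 - h1
  have hgpos : ∀ α t : ℝ, 0 < t → α ^ 2 < ψ t → 0 < g α t := by
    intro α t ht h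
    rw [hgψ α t ht]
    exact mul_pos (mul_pos hC₀ (Real.rpow_pos_of_pos ht (-qt))) (sub_pos.mpr h)
  have hgneg : ∀ α t : ℝ, 0 < t → ψ t < α ^ 2 → g α t < 0 := by
    intro α t ht h
    rw [hgψ α t ht]
    exact mul_neg_of_pos_of_neg (mul_pos hC₀ (Real.rpow_pos_of_pos ht (-qt))) (sub_neg.mpr h)
  have hgzero : ∀ α t : ℝ, 0 < t → ψ t = α ^ 2 → g α t = 0 := by
    intro α t ht h
    rw [hgψ α t ht, h]; ring
  refine ⟨?_, ?_, ?_, ?_, ?_⟩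
  · -- C¹ of R₀
    intro x hx
    obtain ⟨hx0, hx2⟩ := hmem x hx
    have hsq : ContDiffAt ℝ 1 (fun x : ℝ => x ^ 2) x := contDiffAt_id.pow 2
    have : ContDiffAt ℝ 1 (r0 ∘ fun x : ℝ => x ^ 2) x :=
      ContDiffAt.comp (g := r0) (f := fun y : ℝ => y ^ 2) x
        (hr0cd (x ^ 2) (by positivity) hx2) hsq
    exact this.contDiffWithinAt
  · -- C¹ of R₁
    intro x hx
    obtain ⟨hx0, hx2⟩ := hmem x hx
    have hsq : ContDiffAt ℝ 1 (fun x : ℝ => x ^ 2) x := contDiffAt_id.pow 2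
    have : ContDiffAt ℝ 1 (r1 ∘ fun x : ℝ => x ^ 2) x :=
      ContDiffAt.comp (g := r1) (f := fun y : ℝ => y ^ 2) x
        (hr1cd (x ^ 2) (by positivity) hx2) hsq
    exact this.contDiffWithinAt
  · -- R₀ strictly monotone
    left
    intro x hxm y hym hxy
    obtain ⟨hx0, hx2⟩ := hmem x hxm
    obtain ⟨hy0, hy2⟩ := hmem y hym
    exact hr0mono _ _ (by positivity) hx2 hy2 (by nlinarith)
  · -- R₁ strictly antitone
    right
    intro x hxm y hym hxy
    obtain ⟨hx0, hx2⟩ := hmem x hxm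
    obtain ⟨hy0, hy2⟩ := hmem y hym
    exact hr1anti _ _ (by positivity) hx2 hy2 (by nlinarith)
  · -- pointwise properties
    intro c' hc'
    obtain ⟨hc'0, hc'2⟩ := hmem c' hc'
    have ha : 0 < c' ^ 2 := by positivity
    obtain ⟨h00, h0T, h0ψ⟩ := hr0 (c' ^ 2) ⟨ha, hc'2⟩
    obtain ⟨h1T, h1ψ⟩ := hr1 (c' ^ 2) ⟨ha, hc'2⟩
    have h10 : 0 < r1 (c' ^ 2) := lt_trans hT0 h1T
    refine ⟨hc'0, by rw [← hM]; exact hc'2, h00, lt_trans h0T h1T,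
      hgzero _ _ h00 h0ψ, hgzero _ _ h10 h1ψ, ?_, ?_⟩
    · intro t ht
      have ht0 : 0 < t := lt_trans h00 ht.1
      apply hgpos _ _ ht0
      rcases le_or_gt t T with hle | hlt
      · rw [← h0ψ]
        exact hmono ⟨h00.le, h0T.le⟩ ⟨ht0.le, hle⟩ ht.1
      · rw [← h1ψ]
        exact hanti hlt.le h1T.le ht.2
    · rintro t (⟨ht0, htR⟩ | htR)
      · apply hgneg _ _ ht0
        rw [← h0ψ]
        exact hmono ⟨ht0.le, (le_trans htR.le h0T.le)⟩ ⟨h00.le, h0T.le⟩ htR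
      · have ht0 : 0 < t := lt_trans h10 htR
        apply hgneg _ _ ht0
        rw [← h1ψ]
        exact hanti h1T.le (le_trans h1T.le htR.le) htR
end

section
/- Suppose x > 0 is a real number satisfying x² ≤ A + B·x^p, where p ∈ (0,2) and A, B > 0 are real numbers such that B·(√A + 1/2)^p ≤ √A + 1/4. Then x ≤ √A + 1/2. -/
open Real

/-!
Put `y = √A + 1/2`, so that `y² - A = √A + 1/4` and the hypothesis reads `B y^p ≤ y² - A`.
Since `t ↦ t^(p-2)` is strictly decreasing for `p < 2`, if `x > y` then
`B x^p / x² < B y^p / y² ≤ 1 - A / y² ≤ 1 - A / x²`, i.e. `x² > A + B x^p`.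
-/

namespace Real

theorem rpow_mul_sq_lt_rpow_mul_sq {x y p : ℝ} (hy : 0 < y) (hxy : y < x) (hp : p < 2) :
    x ^ p * y ^ 2 < y ^ p * x ^ 2 := by
  have hdecr : x ^ (p - (2 : ℕ)) < y ^ (p - (2 : ℕ)) :=
    rpow_lt_rpow_of_neg hy hxy (by norm_num; linarith)
  have hx : 0 < x := hy.trans hxy
  rw [rpow_sub_natCast hx.ne', rpow_sub_natCast hy.ne'] at hdecr
  exact (div_lt_div_iff₀ (by positivity) (by positivity)).1 hdecr

theorem le_of_sq_le_add_mul_rpow {x y A B p : ℝ} (hA : 0 ≤ A) (hB : 0 < B) (hp : p < 2)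
    (hy : 0 < y) (hBy : B * y ^ p ≤ y ^ 2 - A) (h : x ^ 2 ≤ A + B * x ^ p) : x ≤ y := by
  by_contra! hxy
  have key : B * x ^ p * y ^ 2 < (y ^ 2 - A) * x ^ 2 :=
    calc B * x ^ p * y ^ 2 = B * (x ^ p * y ^ 2) := by ring
      _ < B * (y ^ p * x ^ 2) :=
        mul_lt_mul_of_pos_left (rpow_mul_sq_lt_rpow_mul_sq hy hxy hp) hB
      _ = B * y ^ p * x ^ 2 := by ring
      _ ≤ (y ^ 2 - A) * x ^ 2 := by gcongr
  linarith [mul_le_mul_of_nonneg_right h (sq_nonneg y), mul_le_mul_of_nonneg_left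
    (pow_le_pow_left₀ hy.le hxy.le 2) hA]

end Real

theorem stmt_7_general (x A B p : ℝ) (hp2 : p < 2)
    (hA : 0 < A) (hB : 0 < B)
    (hcond : B * (Real.sqrt A + 1 / 2) ^ p ≤ Real.sqrt A + 1 / 4)
    (h : x ^ 2 ≤ A + B * x ^ p) :
    x ≤ Real.sqrt A + 1 / 2 := by
  have hsqrt : Real.sqrt A ^ 2 = A := sq_sqrt hA.le
  refine le_of_sq_le_add_mul_rpow hA.le hB hp2 (by positivity) ?_ h
  calc B * (Real.sqrt A + 1 / 2) ^ p ≤ Real.sqrt A + 1 / 4 := hcond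
    _ = (Real.sqrt A + 1 / 2) ^ 2 - A := by rw [add_sq, hsqrt]; ring

/-- If x > 0 satisfies x² ≤ A + B x^p with p ∈ (0,2), A, B > 0 and
B(√A + 1/2)^p ≤ √A + 1/4, then x ≤ √A + 1/2. -/
theorem stmt_7 (x A B p : ℝ) (hx : 0 < x) (hp : 0 < p) (hp2 : p < 2)
    (hA : 0 < A) (hB : 0 < B)
    (hcond : B * (Real.sqrt A + 1 / 2) ^ p ≤ Real.sqrt A + 1 / 4)
    (h : x ^ 2 ≤ A + B * x ^ p) :
    x ≤ Real.sqrt A + 1 / 2 :=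
  stmt_7_general x A B p hp2 hA hB hcond h
end
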